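/- For every ε > 0 and every c > 0 there exists p_0 with the following property: for every prime p ≥ p_0, every p²-periodic binary sequence S satisfying C_2(S,N) ≤ c·p·(log p)^3 for all positive integers N ≤ p², and every positive integer N with 2c·p^{1+ε}·(log p)^3 < N ≤ p², one has C_2(S,N) < N/2, and consequently the N-th linear complexity satisfies 2^{L(S,N)} > ⌊N/2⌋, so that L(S,N) > log_2(⌊N/2⌋). All logarithms are in base 2. -/

import Mathlib

/-!
A linear recurrence of order `L = L(S,N)` determines each term from the preceding state of
`L` bits. Among the `2^L + 1` states starting at `0, …, 2^L` two coincide, say at `i < j ≤ 2^L`,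
and from then on the recurrence forces `s (n + i) = s (n + j)` for all `n < N - j`. The shifts
`(i, j)` therefore exhibit a correlation of order 2 of size `N - j ≥ N - 2^L`, so
`N - 2^{L(S,N)} ≤ C₂(S,N)`. The hypothesis gives `C₂(S,N) ≤ c p (log p)³ < N/2` in the stated
range of `N`, whence `2^{L(S,N)} > N/2`.
-/

open Finset

/-- The first `N` terms of the binary sequence `s` satisfy a linear recurrence of order `L`
over `F₂`: `s (i+L) = c_{L-1} s (i+L-1) + … + c_0 s i` for `0 ≤ i < N - L`. -/
def IsLinRecOn (s : ℕ → ZMod 2) (N L : ℕ) : Prop :=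
  ∃ c : Fin L → ZMod 2, ∀ i, i + L < N → s (i + L) = ∑ j : Fin L, c j * s (i + j)

/-- The `N`th linear complexity of a binary sequence `s`: the smallest positive `L` such that
the first `N` terms satisfy a linear recurrence of order `L`, with the convention that it is `0`
when the first `N` terms all vanish. -/
noncomputable def linComplexity (s : ℕ → ZMod 2) (N : ℕ) : ℕ :=
  if ∀ i < N, s i = 0 then 0 else sInf {L | 0 < L ∧ IsLinRecOn s N L}

/-- The `N`th (aperiodic) correlation measure of order `k` of a binary sequence `s`:
`max_{U,D} |∑_{n=0}^{U-1} (-1)^{s_{n+d₁}+…+s_{n+d_k}}|` over `U ≤ N - k + 1` and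
`0 ≤ d₁ < … < d_k ≤ N - U`. -/
noncomputable def corr (s : ℕ → ZMod 2) (N k : ℕ) : ℕ :=
  sSup {m : ℕ | ∃ (U : ℕ) (d : Fin k → ℕ), U + k ≤ N + 1 ∧ StrictMono d ∧
    (∀ j, d j + U ≤ N) ∧
    m = (∑ n ∈ range U, (-1 : ℤ) ^ (∑ j : Fin k, (s (n + d j)).val)).natAbs}

/-- The periodic correlation measure of order `k` of a `T`-periodic binary sequence `s`:
`max_D |∑_{n=0}^{T-1} (-1)^{s_{n+d₁}+…+s_{n+d_k}}|` over `0 ≤ d₁ < … < d_k < T`. -/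
noncomputable def pcorr (s : ℕ → ZMod 2) (T k : ℕ) : ℕ :=
  sSup {m : ℕ | ∃ d : Fin k → ℕ, StrictMono d ∧ (∀ j, d j < T) ∧
    m = (∑ n ∈ range T, (-1 : ℤ) ^ (∑ j : Fin k, (s (n + d j)).val)).natAbs}

/-- The first `N` terms of `s` are generated by a (not necessarily linear) recurrence of
order `M`. -/
def IsMaxRecOn (s : ℕ → ZMod 2) (N M : ℕ) : Prop :=
  ∃ f : (Fin M → ZMod 2) → ZMod 2, ∀ i, i + M < N → s (i + M) = f (fun j => s (i + j))

/-- The `N`th maximum-order complexity of a binary sequence `s`. -/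
noncomputable def maxOrderComplexity (s : ℕ → ZMod 2) (N : ℕ) : ℕ :=
  sInf {M | 0 < M ∧ IsMaxRecOn s N M}

lemma natAbs_sum_neg_one_pow_le_card {ι : Type*} (t : Finset ι) (e : ι → ℕ) :
    (∑ n ∈ t, (-1 : ℤ) ^ e n).natAbs ≤ #t :=
  (Int.natAbs_sum_le _ _).trans_eq (by simp [Int.natAbs_pow])

lemma natAbs_sum_le_corr (s : ℕ → ZMod 2) {N k U : ℕ} {d : Fin k → ℕ} (hU : U + k ≤ N + 1)
    (hd : StrictMono d) (hdU : ∀ j, d j + U ≤ N) :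
    (∑ n ∈ range U, (-1 : ℤ) ^ (∑ j : Fin k, (s (n + d j)).val)).natAbs ≤ corr s N k := by
  refine le_csSup ⟨N + 1, ?_⟩ ⟨U, d, hU, hd, hdU, rfl⟩
  rintro m ⟨U, d, hU, -, -, rfl⟩
  have := natAbs_sum_neg_one_pow_le_card (range U) fun n => ∑ j : Fin k, (s (n + d j)).val
  rw [card_range] at this
  omega

lemma isLinRecOn_linComplexity (s : ℕ → ZMod 2) (N : ℕ) :
    IsLinRecOn s N (linComplexity s N) := by
  unfold linComplexity
  split_ifs with hzero
  · exact ⟨Fin.elim0, fun i hi => by simpa using hzero i (by omega)⟩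
  · push Not at hzero
    obtain ⟨i, hi, -⟩ := hzero
    have hN : N ∈ {L | 0 < L ∧ IsLinRecOn s N L} :=
      ⟨by omega, fun _ => 0, fun i hi => absurd hi (by omega)⟩
    exact (Nat.sInf_mem ⟨N, hN⟩).2

lemma exists_window_eq (s : ℕ → ZMod 2) (L : ℕ) :
    ∃ i j, i < j ∧ j ≤ 2 ^ L ∧ ∀ k < L, s (i + k) = s (j + k) := by
  have hcard : Fintype.card (Fin L → ZMod 2) < Fintype.card (Fin (2 ^ L + 1)) := by
    simp
  obtain ⟨a, b, hab, heq⟩ :=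
    Fintype.exists_ne_map_eq_of_card_lt (fun (i : Fin (2 ^ L + 1)) (k : Fin L) => s (i + k)) hcard
  rcases lt_or_gt_of_ne hab with hlt | hlt
  · exact ⟨a, b, hlt, by omega, fun k hk => congrFun heq ⟨k, hk⟩⟩
  · exact ⟨b, a, hlt, by omega, fun k hk => (congrFun heq ⟨k, hk⟩).symm⟩

lemma IsLinRecOn.shift_eq_of_window_eq {s : ℕ → ZMod 2} {N L i j : ℕ} (hrec : IsLinRecOn s N L)
    (hij : i ≤ j) (hwin : ∀ k < L, s (i + k) = s (j + k)) :
    ∀ n, n + j < N → s (n + i) = s (n + j) := by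
  obtain ⟨c, hc⟩ := hrec
  intro n
  induction n using Nat.strong_induction_on with
  | _ n ih =>
    intro hn
    rcases lt_or_ge n L with hnL | hLn
    · simpa [Nat.add_comm] using hwin n hnL
    · rw [show n + i = n - L + i + L by omega, show n + j = n - L + j + L by omega,
        hc _ (by omega), hc _ (by omega)]
      refine sum_congr rfl fun k _ => ?_
      rw [show n - L + i + k = n - L + k + i by omega, show n - L + j + k = n - L + k + j by omega,
        ih (n - L + k) (by omega) (by omega)]

lemma sub_le_corr_of_shift_eq {s : ℕ → ZMod 2} {N i j : ℕ} (hij : i < j) (hjN : j ≤ N)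
    (hshift : ∀ n, n + j < N → s (n + i) = s (n + j)) :
    N - j ≤ corr s N 2 := by
  have hd : StrictMono ![i, j] := by
    intro a b hab
    fin_cases a <;> fin_cases b <;> simp_all
  have hterm : ∀ n ∈ range (N - j), (-1 : ℤ) ^ (∑ t : Fin 2, (s (n + ![i, j] t)).val) = 1 := by
    intro n hn
    rw [Fin.sum_univ_two, Matrix.cons_val_zero, Matrix.cons_val_one, Matrix.cons_val_zero,
      hshift n (by rw [mem_range] at hn; omega)]
    exact Even.neg_one_pow (Even.add_self _)
  have hsum : ∑ n ∈ range (N - j), (-1 : ℤ) ^ (∑ t : Fin 2, (s (n + ![i, j] t)).val) =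
      (N - j : ℕ) := by
    rw [sum_congr rfl hterm, sum_const, card_range, nsmul_one]
  have := natAbs_sum_le_corr s (N := N) (k := 2) (U := N - j) (by omega) hd
    (by intro t; fin_cases t <;> simp <;> omega)
  rwa [hsum, Int.natAbs_natCast] at this

theorem sub_two_pow_linComplexity_le_corr (s : ℕ → ZMod 2) (N : ℕ) :
    N - 2 ^ linComplexity s N ≤ corr s N 2 := by
  obtain ⟨i, j, hij, hj, hwin⟩ := exists_window_eq s (linComplexity s N)
  rcases le_or_gt N (2 ^ linComplexity s N) with hN | hN
  · omega
  · have hshift := (isLinRecOn_linComplexity s N).shift_eq_of_window_eq hij.le hwin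
    have := sub_le_corr_of_shift_eq hij (by omega) hshift
    omega

theorem half_lt_two_pow_linComplexity {s : ℕ → ZMod 2} {N : ℕ} (h : 2 * corr s N 2 < N) :
    N / 2 < 2 ^ linComplexity s N := by
  have := sub_two_pow_linComplexity_le_corr s N
  omega

/-- **Fermat-quotient corollary, genericized.** For every `ε > 0` and `c > 0` there is `p₀`
such that for every prime `p ≥ p₀`, every `p²`-periodic binary sequence with
`C₂(S,N) ≤ c p (log p)³` for all `N ≤ p²`, and every `N` with
`2c p^{1+ε} (log p)³ < N ≤ p²`, one has `C₂(S,N) < N/2`, hence `2^{L(S,N)} > ⌊N/2⌋` and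
`L(S,N) > log₂⌊N/2⌋`. -/
theorem fermat_quotient_linComplexity (ε c : ℝ) (hε : 0 < ε) (hc : 0 < c) :
    ∃ p₀ : ℕ, ∀ p : ℕ, p₀ ≤ p → p.Prime → ∀ s : ℕ → ZMod 2,
      (∀ i, s (i + p ^ 2) = s i) →
      (∀ N : ℕ, 0 < N → N ≤ p ^ 2 →
        (corr s N 2 : ℝ) ≤ c * p * (Real.logb 2 p) ^ 3) →
      ∀ N : ℕ, 2 * c * (p : ℝ) ^ ((1 : ℝ) + ε) * (Real.logb 2 p) ^ 3 < (N : ℝ) →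
        N ≤ p ^ 2 →
        (corr s N 2 : ℝ) < (N : ℝ) / 2 ∧
        N / 2 < 2 ^ linComplexity s N ∧
        Real.logb 2 (N / 2 : ℕ) < (linComplexity s N : ℝ) := by
  -- `p ≥ 1/c` forces `N ≥ 2`, so that `log₂ ⌊N/2⌋` is not the junk value `log₂ 0 = 0`.
  refine ⟨⌈1 / c⌉₊, fun p hp hprime s _ hcorr N hNlow hNp => ?_⟩
  have hp2 : (2 : ℝ) ≤ p := by exact_mod_cast hprime.two_le
  have hcp : 1 ≤ c * p := (div_le_iff₀' hc).1 ((Nat.le_ceil _).trans (by exact_mod_cast hp))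
  have hlog : 1 ≤ Real.logb 2 p ^ 3 :=
    one_le_pow₀ ((Real.le_logb_iff_rpow_le one_lt_two (by linarith)).2 (by simpa using hp2))
  have hrpow : (p : ℝ) ≤ p ^ ((1 : ℝ) + ε) :=
    Real.self_le_rpow_of_one_le (by linarith) (by linarith)
  have hthreshold : 2 * c * p * Real.logb 2 p ^ 3 < N :=
    lt_of_le_of_lt (by gcongr) hNlow
  have hN : 2 ≤ N := by
    have : (2 : ℝ) ≤ 2 * c * p * Real.logb 2 p ^ 3 := by nlinarith
    exact_mod_cast (this.trans hthreshold.le)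
  have hhalf : (corr s N 2 : ℝ) < N / 2 := by
    linarith [hcorr N (by omega) hNp]
  have hpow : N / 2 < 2 ^ linComplexity s N :=
    half_lt_two_pow_linComplexity (by exact_mod_cast (by linarith : 2 * (corr s N 2 : ℝ) < N))
  have hhalf_pos : (0 : ℝ) < (N / 2 : ℕ) := by exact_mod_cast (by omega : 0 < N / 2)
  refine ⟨hhalf, hpow, (Real.logb_lt_iff_lt_rpow one_lt_two hhalf_pos).2 ?_⟩
  rw [Real.rpow_natCast]
  exact_mod_cast hpow
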